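/- arXiv:1312.0325 — 2 statements merged into one kernel-verified Lean document; each statement's English description precedes it below -/
import Mathlib

section
/- Let d ≥ 2 and n ≥ d+2 be integers with C(n,d) even. Then there exists a perfect family M of d-element subsets of [n] with |M| = C(n,d)/2. -/
/-- `M` is a family of `d`-element subsets of `[n] = {1,...,n}`. -/
def isFam (n d : ℕ) (M : Finset (Finset ℕ)) : Prop :=
  ∀ a ∈ M, a ⊆ Finset.Icc 1 n ∧ a.card = d

/-- Every `(d+1)`-subset of `[n]` contains a member of `M`. -/
def upperPerfect (n d : ℕ) (M : Finset (Finset ℕ)) : Prop :=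
  ∀ u : Finset ℕ, u ⊆ Finset.Icc 1 n → u.card = d + 1 → ∃ a ∈ M, a ⊆ u

/-- Every `(d-1)`-subset of `[n]` is contained in a member of `M`. -/
def lowerPerfect (n d : ℕ) (M : Finset (Finset ℕ)) : Prop :=
  ∀ u : Finset ℕ, u ⊆ Finset.Icc 1 n → u.card = d - 1 → ∃ a ∈ M, u ⊆ a

/-- `M` is perfect: both upper and lower perfect. -/
def perfectFam (n d : ℕ) (M : Finset (Finset ℕ)) : Prop :=
  upperPerfect n d M ∧ lowerPerfect n d M

/-!
Half-size perfect families are built by induction on `n` along Pascal's rule: if `F` is perfect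
for `(n, d)` and `U` for `(n, d + 1)`, then `U ∪ {insert (n + 1) B | B ∈ F}` is perfect for
`(n + 1, d + 1)`, and `C(n + 1, d + 1) = C(n, d) + C(n, d + 1)`. The induction bottoms out at
`d = 2`, where the pairs inside the two halves of `[n]` form a perfect family (by pigeonhole), and
at `d = n - 2`, by passing to complements. Since a superset of a perfect family is perfect, a
half-size one can be padded to exactly `C(n, d) / 2` members.
-/

open Finset

section

variable {n d : ℕ}

lemma isFam_iff_subset_powersetCard {M : Finset (Finset ℕ)} :
    isFam n d M ↔ M ⊆ (Icc 1 n).powersetCard d := by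
  simp only [isFam, subset_iff, mem_powersetCard]

lemma perfectFam.mono {P M : Finset (Finset ℕ)} (hP : perfectFam n d P) (hPM : P ⊆ M) :
    perfectFam n d M :=
  ⟨fun u hu hc => (hP.1 u hu hc).imp fun _ ⟨ha, hau⟩ => ⟨hPM ha, hau⟩,
    fun u hu hc => (hP.2 u hu hc).imp fun _ ⟨ha, hua⟩ => ⟨hPM ha, hua⟩⟩

def HasHalfPerfectFam (n d : ℕ) : Prop :=
  ∃ M : Finset (Finset ℕ), isFam n d M ∧ perfectFam n d M ∧ 2 * M.card ≤ n.choose d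

lemma two_mul_choose_two_add_choose_two_le (n : ℕ) :
    2 * ((n / 2).choose 2 + (n - n / 2).choose 2) ≤ n.choose 2 := by
  suffices h : (2 * ((n / 2).choose 2 + (n - n / 2).choose 2) : ℚ) ≤ n.choose 2 by
    exact_mod_cast h
  obtain ⟨k, rfl | rfl⟩ := Nat.even_or_odd' n
  · rw [show 2 * k / 2 = k by omega, show 2 * k - k = k by omega]
    simp only [Nat.cast_choose_two]
    push_cast
    nlinarith [(Nat.cast_nonneg k : (0 : ℚ) ≤ k)]
  · rw [show (2 * k + 1) / 2 = k by omega, show 2 * k + 1 - k = k + 1 by omega]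
    simp only [Nat.cast_choose_two]
    push_cast
    nlinarith [(Nat.cast_nonneg k : (0 : ℚ) ≤ k)]

section TwoCliques

variable {A B : Finset ℕ}

lemma upperPerfect_two_cliques (hAB : Icc 1 n ⊆ A ∪ B) :
    upperPerfect n 2 (A.powersetCard 2 ∪ B.powersetCard 2) := by
  intro u hu hcard
  have hsplit : u = u ∩ A ∪ u ∩ B := by
    rw [← inter_union_distrib_left, inter_eq_left.2 (hu.trans hAB)]
  have hcard_le : 3 ≤ (u ∩ A).card + (u ∩ B).card := by
    have := card_union_le (u ∩ A) (u ∩ B)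
    rw [← hsplit] at this
    omega
  rcases (by omega : 2 ≤ (u ∩ A).card ∨ 2 ≤ (u ∩ B).card) with h | h
  · obtain ⟨t, ht, htc⟩ := exists_subset_card_eq h
    exact ⟨t, mem_union_left _ (mem_powersetCard.2 ⟨ht.trans inter_subset_right, htc⟩),
      ht.trans inter_subset_left⟩
  · obtain ⟨t, ht, htc⟩ := exists_subset_card_eq h
    exact ⟨t, mem_union_right _ (mem_powersetCard.2 ⟨ht.trans inter_subset_right, htc⟩),
      ht.trans inter_subset_left⟩

lemma exists_pair_mem_powersetCard {a : ℕ} (ha : a ∈ A) (hA : 2 ≤ A.card) :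
    ∃ t ∈ A.powersetCard 2, {a} ⊆ t := by
  obtain ⟨b, hb, hba⟩ := exists_mem_ne hA a
  refine ⟨{a, b}, mem_powersetCard.2 ⟨?_, card_pair hba.symm⟩, by simp⟩
  simp [insert_subset_iff, ha, hb]

lemma lowerPerfect_two_cliques (hAB : Icc 1 n ⊆ A ∪ B) (hA : 2 ≤ A.card) (hB : 2 ≤ B.card) :
    lowerPerfect n 2 (A.powersetCard 2 ∪ B.powersetCard 2) := by
  intro u hu hcard
  obtain ⟨a, rfl⟩ := card_eq_one.1 hcard
  rcases mem_union.1 (hAB (hu (mem_singleton_self a))) with ha | ha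
  · obtain ⟨t, ht, hat⟩ := exists_pair_mem_powersetCard ha hA
    exact ⟨t, mem_union_left _ ht, hat⟩
  · obtain ⟨t, ht, hat⟩ := exists_pair_mem_powersetCard ha hB
    exact ⟨t, mem_union_right _ ht, hat⟩

end TwoCliques

lemma hasHalfPerfectFam_two (hn : 4 ≤ n) : HasHalfPerfectFam n 2 := by
  set k := n / 2
  have hAB : Icc 1 n ⊆ Icc 1 k ∪ Icc (k + 1) n := by
    intro x; simp only [mem_union, mem_Icc]; omega
  have hA : (Icc 1 k).card = k := by simp
  have hB : (Icc (k + 1) n).card = n - k := by simp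
  refine ⟨(Icc 1 k).powersetCard 2 ∪ (Icc (k + 1) n).powersetCard 2, ?_,
    ⟨upperPerfect_two_cliques hAB, lowerPerfect_two_cliques hAB (by omega) (by omega)⟩, ?_⟩
  · refine isFam_iff_subset_powersetCard.2 (union_subset ?_ ?_) <;>
      exact powersetCard_mono (Icc_subset_Icc (by omega) (by omega))
  · have hunion := card_union_le ((Icc 1 k).powersetCard 2) ((Icc (k + 1) n).powersetCard 2)
    rw [card_powersetCard, card_powersetCard, hA, hB] at hunion
    have : 2 * (k.choose 2 + (n - k).choose 2) ≤ n.choose 2 :=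
      two_mul_choose_two_add_choose_two_le n
    omega

lemma HasHalfPerfectFam.compl (h : HasHalfPerfectFam n d) (hd : d < n) :
    HasHalfPerfectFam n (n - d) := by
  obtain ⟨P, hPfam, ⟨hPup, hPlow⟩, hPcard⟩ := h
  have card_compl {u : Finset ℕ} (hu : u ⊆ Icc 1 n) : (Icc 1 n \ u).card = n - u.card := by
    rw [card_sdiff_of_subset hu, Nat.card_Icc, Nat.add_sub_cancel]
  refine ⟨P.image (Icc 1 n \ ·), ?_, ⟨?_, ?_⟩, ?_⟩
  · simp only [isFam, mem_image, forall_exists_index, and_imp, forall_apply_eq_imp_iff₂]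
    intro a ha
    obtain ⟨hsub, hcard⟩ := hPfam a ha
    exact ⟨sdiff_subset, by rw [card_compl hsub, hcard]⟩
  · intro u hu hcard
    obtain ⟨a, ha, hua⟩ := hPlow (Icc 1 n \ u) sdiff_subset (by rw [card_compl hu]; omega)
    exact ⟨_, mem_image_of_mem _ ha, sdiff_le_comm.1 hua⟩
  · intro u hu hcard
    obtain ⟨a, ha, hau⟩ := hPup (Icc 1 n \ u) sdiff_subset (by rw [card_compl hu]; omega)
    exact ⟨_, mem_image_of_mem _ ha, subset_sdiff.2 ⟨hu, (subset_sdiff.1 hau).2.symm⟩⟩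
  · rw [Nat.choose_symm hd.le]
    grw [card_image_le]
    exact hPcard

lemma erase_subset_Icc_of_subset_Icc_succ {u : Finset ℕ} (hu : u ⊆ Icc 1 (n + 1)) :
    u.erase (n + 1) ⊆ Icc 1 n := by
  intro x hx
  have := hu (mem_of_mem_erase hx)
  simp only [mem_Icc] at this ⊢
  have := ne_of_mem_erase hx
  omega

lemma subset_Icc_of_subset_Icc_succ {u : Finset ℕ} (hu : u ⊆ Icc 1 (n + 1)) (hn : n + 1 ∉ u) :
    u ⊆ Icc 1 n :=
  erase_eq_of_notMem hn ▸ erase_subset_Icc_of_subset_Icc_succ hu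

section Extension

variable {F U : Finset (Finset ℕ)}

lemma isFam_union_image_insert (hF : isFam n d F) (hU : isFam n (d + 1) U) :
    isFam (n + 1) (d + 1) (U ∪ F.image (insert (n + 1))) := by
  have hIcc : Icc 1 n ⊆ Icc 1 (n + 1) := Icc_subset_Icc_right n.le_succ
  simp only [isFam, mem_union, mem_image]
  rintro _ (ha | ⟨B, hB, rfl⟩)
  · exact ⟨(hU _ ha).1.trans hIcc, (hU _ ha).2⟩
  · obtain ⟨hsub, hcard⟩ := hF B hB
    have hnB : n + 1 ∉ B := fun h => by simpa using hsub h
    refine ⟨insert_subset (by simp) (hsub.trans hIcc), ?_⟩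
    rw [card_insert_of_notMem hnB, hcard]

lemma upperPerfect_union_image_insert (hF : upperPerfect n d F) (hU : upperPerfect n (d + 1) U) :
    upperPerfect (n + 1) (d + 1) (U ∪ F.image (insert (n + 1))) := by
  intro u hu hcard
  by_cases hnu : n + 1 ∈ u
  · obtain ⟨B, hB, hBu⟩ := hF (u.erase (n + 1)) (erase_subset_Icc_of_subset_Icc_succ hu)
      (by rw [card_erase_of_mem hnu, hcard]; omega)
    exact ⟨insert (n + 1) B, mem_union_right _ (mem_image_of_mem _ hB),
      insert_subset hnu (hBu.trans (erase_subset _ _))⟩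
  · obtain ⟨a, ha, hau⟩ := hU u (subset_Icc_of_subset_Icc_succ hu hnu) hcard
    exact ⟨a, mem_union_left _ ha, hau⟩

lemma lowerPerfect_union_image_insert (hF : lowerPerfect n d F) (hU : lowerPerfect n (d + 1) U) :
    lowerPerfect (n + 1) (d + 1) (U ∪ F.image (insert (n + 1))) := by
  intro u hu hcard
  by_cases hnu : n + 1 ∈ u
  · obtain ⟨B, hB, huB⟩ := hF (u.erase (n + 1)) (erase_subset_Icc_of_subset_Icc_succ hu)
      (by rw [card_erase_of_mem hnu, hcard]; omega)
    exact ⟨insert (n + 1) B, mem_union_right _ (mem_image_of_mem _ hB),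
      (insert_erase hnu).symm.subset.trans (insert_subset_insert _ huB)⟩
  · obtain ⟨a, ha, hua⟩ := hU u (subset_Icc_of_subset_Icc_succ hu hnu) hcard
    exact ⟨a, mem_union_left _ ha, hua⟩

end Extension

lemma HasHalfPerfectFam.succ (hF : HasHalfPerfectFam n d) (hU : HasHalfPerfectFam n (d + 1)) :
    HasHalfPerfectFam (n + 1) (d + 1) := by
  obtain ⟨F, hFfam, ⟨hFup, hFlow⟩, hFcard⟩ := hF
  obtain ⟨U, hUfam, ⟨hUup, hUlow⟩, hUcard⟩ := hU
  refine ⟨U ∪ F.image (insert (n + 1)), isFam_union_image_insert hFfam hUfam,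
    ⟨upperPerfect_union_image_insert hFup hUup,
      lowerPerfect_union_image_insert hFlow hUlow⟩, ?_⟩
  grw [card_union_le, card_image_le, Nat.choose_succ_succ']
  omega

lemma hasHalfPerfectFam (hd : 2 ≤ d) (hn : d + 2 ≤ n) : HasHalfPerfectFam n d := by
  induction n generalizing d with
  | zero => omega
  | succ m ih =>
    obtain rfl | hd_gt := hd.eq_or_lt
    · exact hasHalfPerfectFam_two hn
    obtain rfl | hd_lt := (show d ≤ m - 1 by omega).eq_or_lt
    · have h := (hasHalfPerfectFam_two (n := m + 1) (by omega)).compl (by omega)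
      rwa [show m + 1 - 2 = m - 1 by omega] at h
    obtain ⟨e, rfl⟩ : ∃ e, d = e + 1 := ⟨d - 1, by omega⟩
    exact (ih (by omega) (by omega)).succ (ih hd (by omega))

end

theorem stmt_6 (n d : ℕ) (hd : 2 ≤ d) (hn : d + 2 ≤ n) (heven : 2 ∣ n.choose d) :
    ∃ M : Finset (Finset ℕ), isFam n d M ∧ perfectFam n d M ∧
      2 * M.card = n.choose d := by
  obtain ⟨P, hPfam, hP, hPcard⟩ := hasHalfPerfectFam hd hn
  have hall : ((Icc 1 n).powersetCard d).card = n.choose d := by simp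
  obtain ⟨M, hPM, hM, hMcard⟩ :=
    exists_subsuperset_card_eq (isFam_iff_subset_powersetCard.1 hPfam) (n := n.choose d / 2)
      (by omega) (by omega)
  exact ⟨M, isFam_iff_subset_powersetCard.2 hM, hP.mono hPM, by omega⟩
end

section
/- Let d ≥ 2 and n = d+2. Then the minimum cardinality of a perfect family of d-element subsets of [n] equals the minimum cardinality of a perfect family of 2-element subsets of [n]; in particular it equals k²-k if n = 2k and k² if n = 2k+1. -/
/-!
Taking complements in `[n]` swaps the two halves of perfection, so perfect families of
`d`-subsets and of `2`-subsets of `[d+2]` have the same possible sizes. A family `M` of pairs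
contains a pair inside every triple exactly when the pairs missing from `M` form a triangle-free
graph, so by Mantel's theorem `|M| ≥ C(n,2) - ⌊n²/4⌋`. Equality is attained by the two
cliques on the halves `{1,…,⌊n/2⌋}` and `{⌊n/2⌋+1,…,n}`.
-/

open Finset

def perfectSizes (n c : ℕ) : Set ℕ :=
  {m | ∃ M : Finset (Finset ℕ), isFam n c M ∧ perfectFam n c M ∧ M.card = m}

lemma Nat.card_Icc_one (n : ℕ) : #(Icc 1 n) = n := by
  rw [Nat.card_Icc, Nat.add_sub_cancel]

section Complement

variable {n c : ℕ} {M : Finset (Finset ℕ)}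

lemma isFam.image_sdiff (hF : isFam n c M) : isFam n (n - c) (M.image (Icc 1 n \ ·)) := by
  simp only [isFam, mem_image, forall_exists_index, and_imp, forall_apply_eq_imp_iff₂]
  intro a ha
  rw [card_sdiff_of_subset (hF a ha).1, Nat.card_Icc_one, (hF a ha).2]
  exact ⟨sdiff_subset, rfl⟩

lemma isFam.card_image_sdiff (hF : isFam n c M) : #(M.image (Icc 1 n \ ·)) = #M :=
  card_image_of_injOn fun a ha b hb hab => by
    rw [← Finset.sdiff_sdiff_eq_self (hF a ha).1, ← Finset.sdiff_sdiff_eq_self (hF b hb).1]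
    exact congrArg (Icc 1 n \ ·) hab

lemma lowerPerfect.upperPerfect_image_sdiff (hc₀ : 0 < c) (hc : c ≤ n)
    (hL : lowerPerfect n c M) : upperPerfect n (n - c) (M.image (Icc 1 n \ ·)) := by
  intro u hu hcard
  have hcu : #(Icc 1 n \ u) = c - 1 := by
    rw [card_sdiff_of_subset hu, Nat.card_Icc_one]
    omega
  obtain ⟨a, ha, hua⟩ := hL _ sdiff_subset hcu
  exact ⟨_, mem_image_of_mem _ ha, sdiff_le_comm.mp hua⟩

lemma upperPerfect.lowerPerfect_image_sdiff (hc : c < n) (hU : upperPerfect n c M) :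
    lowerPerfect n (n - c) (M.image (Icc 1 n \ ·)) := by
  intro u hu hcard
  have hcu : #(Icc 1 n \ u) = c + 1 := by
    rw [card_sdiff_of_subset hu, Nat.card_Icc_one]
    omega
  obtain ⟨a, ha, hau⟩ := hU _ sdiff_subset hcu
  exact ⟨_, mem_image_of_mem _ ha, subset_sdiff.mpr ⟨hu, (subset_sdiff.mp hau).2.symm⟩⟩

lemma perfectSizes_subset (hc₀ : 0 < c) (hc : c < n) :
    perfectSizes n c ⊆ perfectSizes n (n - c) := by
  rintro _ ⟨M, hF, ⟨hU, hL⟩, rfl⟩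
  exact ⟨_, hF.image_sdiff,
    ⟨hL.upperPerfect_image_sdiff hc₀ hc.le, hU.lowerPerfect_image_sdiff hc⟩,
    hF.card_image_sdiff⟩

lemma perfectSizes_compl (hc₀ : 0 < c) (hc : c < n) :
    perfectSizes n (n - c) = perfectSizes n c := by
  refine (perfectSizes_subset hc₀ hc).antisymm' ?_
  simpa [Nat.sub_sub_self hc.le] using
    perfectSizes_subset (n := n) (c := n - c) (by omega) (by omega)

end Complement

lemma SimpleGraph.CliqueFree.card_edgeFinset_le_sq_div_four {V : Type*} [Fintype V]
    {G : SimpleGraph V} [DecidableRel G.Adj] (h : G.CliqueFree 3) :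
    #G.edgeFinset ≤ Fintype.card V ^ 2 / 4 := by
  have := h.card_edgeFinset_le (r := 2)
  simp only [Nat.add_one_sub_one, mul_one, Nat.reduceMul] at this
  rw [Nat.choose_eq_zero_of_lt (Nat.mod_lt _ two_pos), add_zero] at this
  exact this.trans (Nat.div_le_div_right (Nat.sub_le _ _))

lemma Finset.pair_eq_of_subset_triple {α : Type*} [DecidableEq α] {x y a b c : α} (hxy : x ≠ y)
    (h : {x, y} ⊆ ({a, b, c} : Finset α)) :
    ({x, y} : Finset α) = {a, b} ∨ ({x, y} : Finset α) = {a, c} ∨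
      ({x, y} : Finset α) = {b, c} := by
  simp only [insert_subset_iff, singleton_subset_iff, mem_insert, mem_singleton] at h
  obtain ⟨rfl | rfl | rfl, rfl | rfl | rfl⟩ := h <;> simp_all [pair_comm]

section MissingPairs

variable {n : ℕ} {M : Finset (Finset ℕ)}

def missingPairGraph (n : ℕ) (M : Finset (Finset ℕ)) : SimpleGraph (Icc 1 n) where
  Adj x y := x ≠ y ∧ ({x.1, y.1} : Finset ℕ) ∉ M
  symm := ⟨fun x y h => ⟨h.1.symm, pair_comm (x : ℕ) y ▸ h.2⟩⟩
  loopless := ⟨fun _ h => h.1 rfl⟩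

@[simp]
lemma missingPairGraph_adj {x y : Icc 1 n} :
    (missingPairGraph n M).Adj x y ↔ x ≠ y ∧ ({x.1, y.1} : Finset ℕ) ∉ M :=
  Iff.rfl

instance : DecidableRel (missingPairGraph n M).Adj :=
  fun _ _ => decidable_of_iff' _ missingPairGraph_adj

lemma cliqueFree_missingPairGraph (hF : isFam n 2 M) (hU : upperPerfect n 2 M) :
    (missingPairGraph n M).CliqueFree 3 := by
  intro s hs
  obtain ⟨a, b, c, hab, hac, hbc, rfl⟩ := SimpleGraph.is3Clique_iff.mp hs
  rw [missingPairGraph_adj] at hab hac hbc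
  have hsub : ({a.1, b.1, c.1} : Finset ℕ) ⊆ Icc 1 n := by
    simp only [insert_subset_iff, singleton_subset_iff, coe_mem, and_self]
  have hcard : #({a.1, b.1, c.1} : Finset ℕ) = 3 :=
    card_eq_three.mpr ⟨_, _, _, Subtype.coe_ne_coe.mpr hab.1, Subtype.coe_ne_coe.mpr hac.1,
      Subtype.coe_ne_coe.mpr hbc.1, rfl⟩
  obtain ⟨m, hm, hmsub⟩ := hU _ hsub hcard
  obtain ⟨x, y, hxy, rfl⟩ := card_eq_two.mp (hF m hm).2
  rcases pair_eq_of_subset_triple hxy hmsub with h | h | h <;> rw [h] at hm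
  exacts [hab.2 hm, hac.2 hm, hbc.2 hm]

lemma card_powersetCard_two_sdiff_le :
    #((Icc 1 n).powersetCard 2 \ M) ≤ #(missingPairGraph n M).edgeFinset := by
  refine card_le_card_of_surjOn (fun e => (e.map Subtype.val).toFinset) fun p hp => ?_
  obtain ⟨hp, hpM⟩ := mem_sdiff.mp (mem_coe.mp hp)
  obtain ⟨hpI, hp2⟩ := mem_powersetCard.mp hp
  obtain ⟨x, y, hxy, rfl⟩ := card_eq_two.mp hp2
  refine ⟨s(⟨x, hpI (by simp)⟩, ⟨y, hpI (by simp)⟩), ?_, by simp [Sym2.toFinset_mk_eq]⟩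
  simpa [hxy] using hpM

lemma choose_two_le_card_add_of_upperPerfect (hF : isFam n 2 M) (hU : upperPerfect n 2 M) :
    n.choose 2 ≤ #M + n ^ 2 / 4 := by
  have hM : M ⊆ (Icc 1 n).powersetCard 2 := fun a ha => mem_powersetCard.mpr (hF a ha)
  have hmissing := (card_powersetCard_two_sdiff_le (M := M)).trans
    (cliqueFree_missingPairGraph hF hU).card_edgeFinset_le_sq_div_four
  rw [card_sdiff_of_subset hM, card_powersetCard, Nat.card_Icc_one, Fintype.card_coe,
    Nat.card_Icc_one] at hmissing
  omega

end MissingPairs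

lemma Finset.exists_mem_powersetCard_two_of_mem {α : Type*} [DecidableEq α] {r : Finset α}
    {x : α} (hr : 2 ≤ #r) (hx : x ∈ r) : ∃ p ∈ r.powersetCard 2, x ∈ p := by
  obtain ⟨y, hy, hyx⟩ := exists_mem_ne (by omega : 1 < #r) x
  refine ⟨{x, y}, mem_powersetCard.mpr ⟨?_, card_pair hyx.symm⟩, mem_insert_self x _⟩
  simp only [insert_subset_iff, singleton_subset_iff, hx, hy, and_self]

section TwoCliques

variable {n : ℕ} {s t : Finset ℕ}

lemma isFam_powersetCard_two_union (hs : s ⊆ Icc 1 n) (ht : t ⊆ Icc 1 n) :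
    isFam n 2 (s.powersetCard 2 ∪ t.powersetCard 2) := by
  intro a ha
  rcases mem_union.mp ha with h | h <;> obtain ⟨hsub, hcard⟩ := mem_powersetCard.mp h
  exacts [⟨hsub.trans hs, hcard⟩, ⟨hsub.trans ht, hcard⟩]

lemma upperPerfect_powersetCard_two_union (hst : Icc 1 n ⊆ s ∪ t) :
    upperPerfect n 2 (s.powersetCard 2 ∪ t.powersetCard 2) := by
  intro u hu hcard
  have hsplit : #u ≤ #(u ∩ s) + #(u ∩ t) := calc
    #u = #(u ∩ s ∪ u ∩ t) := by
      rw [← inter_union_distrib_left, inter_eq_left.mpr (hu.trans hst)]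
    _ ≤ #(u ∩ s) + #(u ∩ t) := card_union_le _ _
  rcases (by omega : 2 ≤ #(u ∩ s) ∨ 2 ≤ #(u ∩ t)) with h | h <;>
    obtain ⟨p, hp, hpcard⟩ := exists_subset_card_eq h
  · exact ⟨p, mem_union_left _ (mem_powersetCard.mpr ⟨hp.trans inter_subset_right, hpcard⟩),
      hp.trans inter_subset_left⟩
  · exact ⟨p, mem_union_right _ (mem_powersetCard.mpr ⟨hp.trans inter_subset_right, hpcard⟩),
      hp.trans inter_subset_left⟩

lemma lowerPerfect_powersetCard_two_union (hst : Icc 1 n ⊆ s ∪ t) (hs : 2 ≤ #s)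
    (ht : 2 ≤ #t) : lowerPerfect n 2 (s.powersetCard 2 ∪ t.powersetCard 2) := by
  intro u hu hcard
  obtain ⟨x, rfl⟩ := card_eq_one.mp hcard
  simp only [singleton_subset_iff]
  rcases mem_union.mp (hst (hu (mem_singleton_self x))) with hx | hx
  · obtain ⟨p, hp, hxp⟩ := exists_mem_powersetCard_two_of_mem hs hx
    exact ⟨p, mem_union_left _ hp, hxp⟩
  · obtain ⟨p, hp, hxp⟩ := exists_mem_powersetCard_two_of_mem ht hx
    exact ⟨p, mem_union_right _ hp, hxp⟩

lemma card_powersetCard_two_union (hst : Disjoint s t) :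
    #(s.powersetCard 2 ∪ t.powersetCard 2) = (#s).choose 2 + (#t).choose 2 := by
  have hdisj : Disjoint (s.powersetCard 2) (t.powersetCard 2) := by
    refine disjoint_left.mpr fun p hps hpt => ?_
    obtain ⟨hps, hp⟩ := mem_powersetCard.mp hps
    obtain ⟨x, hx⟩ := card_pos.mp (by omega : 0 < #p)
    exact disjoint_left.mp hst (hps hx) ((mem_powersetCard.mp hpt).1 hx)
  rw [card_union_of_disjoint hdisj, card_powersetCard, card_powersetCard]

end TwoCliques

lemma Nat.add_choose_two (a b : ℕ) : (a + b).choose 2 = a.choose 2 + b.choose 2 + a * b := by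
  induction b with
  | zero => simp
  | succ b ih =>
    rw [← add_assoc, Nat.choose_succ_succ' (a + b) 1, Nat.choose_succ_succ' b 1, ih]
    simp only [Nat.choose_one_right]
    ring

lemma Nat.sq_div_four_eq_half_mul (n : ℕ) : n ^ 2 / 4 = n / 2 * (n - n / 2) := by
  rcases Nat.even_or_odd' n with ⟨k, rfl | rfl⟩
  · rw [show (2 * k) ^ 2 = 4 * (k * k) by ring, Nat.mul_div_cancel_left _ (by norm_num)]
    congr 1 <;> omega
  · rw [show (2 * k + 1) ^ 2 = 1 + 4 * (k * (k + 1)) by ring,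
      Nat.add_mul_div_left _ _ (by norm_num), show (2 * k + 1) / 2 = k by omega,
      show 2 * k + 1 - k = k + 1 by omega]
    simp

lemma Nat.half_choose_two_add_sq_div_four (n : ℕ) :
    (n / 2).choose 2 + (n - n / 2).choose 2 + n ^ 2 / 4 = n.choose 2 := by
  conv_rhs => rw [← Nat.add_sub_of_le (Nat.div_le_self n 2), Nat.add_choose_two,
    ← Nat.sq_div_four_eq_half_mul]

lemma Nat.two_mul_choose_two (k : ℕ) : 2 * k.choose 2 = k * (k - 1) := by
  rw [Nat.choose_two_right, Nat.mul_div_cancel' (Nat.even_mul_pred_self k).two_dvd]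

lemma Nat.half_choose_two_even (k : ℕ) :
    (2 * k / 2).choose 2 + (2 * k - 2 * k / 2).choose 2 = k ^ 2 - k := by
  rw [show 2 * k / 2 = k by omega, show 2 * k - k = k by omega, ← two_mul,
    Nat.two_mul_choose_two, sq, Nat.mul_sub_one]

lemma Nat.half_choose_two_odd (k : ℕ) :
    ((2 * k + 1) / 2).choose 2 + (2 * k + 1 - (2 * k + 1) / 2).choose 2 = k ^ 2 := by
  rw [show (2 * k + 1) / 2 = k by omega, show 2 * k + 1 - k = k + 1 by omega,
    Nat.add_choose_two k 1, Nat.choose_eq_zero_of_lt one_lt_two, add_zero, ← add_assoc,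
    ← two_mul, Nat.two_mul_choose_two, mul_one, sq]
  cases k <;> simp [Nat.mul_succ]

lemma isLeast_perfectSizes_two {n : ℕ} (hn : 4 ≤ n) :
    IsLeast (perfectSizes n 2) ((n / 2).choose 2 + (n - n / 2).choose 2) := by
  have hst : Icc 1 (n / 2) ∪ Icc (n / 2 + 1) n = Icc 1 n := by
    ext x
    simp only [mem_union, mem_Icc]
    omega
  have hdisj : Disjoint (Icc 1 (n / 2)) (Icc (n / 2 + 1) n) :=
    disjoint_left.mpr fun x hx hx' => by simp only [mem_Icc] at hx hx'; omega
  have hs : #(Icc 1 (n / 2)) = n / 2 := by simp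
  have ht : #(Icc (n / 2 + 1) n) = n - n / 2 := by simp
  refine ⟨⟨_,
    isFam_powersetCard_two_union (hst ▸ subset_union_left) (hst ▸ subset_union_right),
    ⟨upperPerfect_powersetCard_two_union hst.ge,
      lowerPerfect_powersetCard_two_union hst.ge (by omega) (by omega)⟩,
    by rw [card_powersetCard_two_union hdisj, hs, ht]⟩, ?_⟩
  rintro _ ⟨M, hF, hP, rfl⟩
  have := choose_two_le_card_add_of_upperPerfect hF hP.1
  have := Nat.half_choose_two_add_sq_div_four n
  omega

theorem stmt_10 (d : ℕ) (hd : 2 ≤ d) :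
    ∃ N : ℕ,
      IsLeast {m : ℕ | ∃ M : Finset (Finset ℕ),
          isFam (d + 2) d M ∧ perfectFam (d + 2) d M ∧ M.card = m} N ∧
      IsLeast {m : ℕ | ∃ M : Finset (Finset ℕ),
          isFam (d + 2) 2 M ∧ perfectFam (d + 2) 2 M ∧ M.card = m} N ∧
      (∀ k : ℕ, d + 2 = 2 * k → N = k ^ 2 - k) ∧
      (∀ k : ℕ, d + 2 = 2 * k + 1 → N = k ^ 2) := by
  have hsizes : perfectSizes (d + 2) d = perfectSizes (d + 2) 2 := by
    simpa using perfectSizes_compl (n := d + 2) (c := 2) (by omega) (by omega)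
  have hleast := isLeast_perfectSizes_two (n := d + 2) (by omega)
  refine ⟨_, (hsizes ▸ hleast : IsLeast (perfectSizes (d + 2) d) _), hleast, fun k hk => ?_,
    fun k hk => ?_⟩
  · rw [hk, Nat.half_choose_two_even]
  · rw [hk, Nat.half_choose_two_odd]
end
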